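/- arXiv:1908.07621 — 3 statements merged into one kernel-verified Lean document; each statement's English description precedes it below -/
import Mathlib

section
/- Suppose n = 2ℓ is even, ℓ ≥ 2. Let C₁ := (1 3 5 … 2ℓ−1) and C₂ := (2 4 … 2ℓ) be the cycles on the odd and even indices respectively, let δ₁ := (1 2)(3 4)⋯(2ℓ−1 2ℓ) and δ₂ := (2 3)(4 5)⋯(2ℓ 1). Then for σ, τ ∈ Sₙ one has ν₂^{(σ,τ)} = ν₂ (as polynomials in R) if and only if there exist integers u, v with 0 ≤ u, v ≤ ℓ−1 such that either (σ, τ) = (C₁^u·C₂^v, C₁^v·C₂^u) or (σ, τ) = (δ₁·C₁^u·C₂^v, δ₂·C₁^v·C₂^u). -/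
open MvPolynomial Finset

noncomputable section

instance (ℓ : ℕ) [NeZero ℓ] : NeZero (2 * ℓ) := ⟨Nat.mul_ne_zero two_ne_zero (NeZero.ne ℓ)⟩

def Zv (n : ℕ) (j : Fin n) : MvPolynomial (Fin n ⊕ Fin n) ℂ := X (Sum.inl j)

def Wv (n : ℕ) (j : Fin n) : MvPolynomial (Fin n ⊕ Fin n) ℂ := X (Sum.inr j)

/-- The second normalized harmonic moment `ν₂`. -/
def nu2 (n : ℕ) [NeZero n] : MvPolynomial (Fin n ⊕ Fin n) ℂ :=
  C (Complex.I / 4) *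
    ∑ j : Fin n, (Wv n j - Wv n (j + 1)) * (Zv n j + Zv n (j + 1))

/-- `ν₂^{(σ,τ)}`: the polynomial obtained from `ν₂` by the substitution
`z_j ↦ z_{σ(j)}`, `w_j ↦ w_{τ(j)}`. -/
def nu2Perm (n : ℕ) [NeZero n] (σ τ : Equiv.Perm (Fin n)) : MvPolynomial (Fin n ⊕ Fin n) ℂ :=
  MvPolynomial.rename (Sum.map ⇑σ ⇑τ) (nu2 n)

/-- The identification `Fin ℓ × Fin 2 ≃ Fin (2ℓ)`, `(q, r) ↦ 2q + r`; the first component is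
the pair index and the second component the parity. -/
def pairEquiv (ℓ : ℕ) : Fin ℓ × Fin 2 ≃ Fin (2 * ℓ) :=
  finProdFinEquiv.trans (finCongr (Nat.mul_comm ℓ 2))

/-- The cycle `C₁ = (1 3 5 … 2ℓ−1)` (in `1`-based labels), i.e. the cyclic shift `j ↦ j + 2`
on the `0`-based even positions, fixing the odd positions. -/
def Codd (ℓ : ℕ) [NeZero ℓ] : Equiv.Perm (Fin (2 * ℓ)) :=
  Equiv.permCongr (pairEquiv ℓ)
    (Equiv.prodCongrLeft fun r : Fin 2 =>
      if r = 0 then Equiv.addLeft (1 : Fin ℓ) else Equiv.refl (Fin ℓ))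

/-- The cycle `C₂ = (2 4 … 2ℓ)` (in `1`-based labels), i.e. the cyclic shift `j ↦ j + 2`
on the `0`-based odd positions, fixing the even positions. -/
def Ceven (ℓ : ℕ) [NeZero ℓ] : Equiv.Perm (Fin (2 * ℓ)) :=
  Equiv.permCongr (pairEquiv ℓ)
    (Equiv.prodCongrLeft fun r : Fin 2 =>
      if r = 1 then Equiv.addLeft (1 : Fin ℓ) else Equiv.refl (Fin ℓ))

/-- The involution `δ₁ = (1 2)(3 4)⋯(2ℓ−1 2ℓ)` (in `1`-based labels), swapping `2q ↔ 2q + 1`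
in `0`-based labels. -/
def delta1 (ℓ : ℕ) [NeZero ℓ] : Equiv.Perm (Fin (2 * ℓ)) :=
  Equiv.permCongr (pairEquiv ℓ)
    (Equiv.prodCongrRight fun _ : Fin ℓ => Equiv.addLeft (1 : Fin 2))

/-- The involution `δ₂ = (2 3)(4 5)⋯(2ℓ 1)` (in `1`-based labels); it is the conjugate of
`δ₁` by the long cycle `j ↦ j + 1`, which swaps `2q + 1 ↔ 2q + 2` cyclically. -/
def delta2 (ℓ : ℕ) [NeZero ℓ] : Equiv.Perm (Fin (2 * ℓ)) :=
  Equiv.addLeft (1 : Fin (2 * ℓ)) * delta1 ℓ * (Equiv.addLeft (1 : Fin (2 * ℓ)))⁻¹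

set_option maxHeartbeats 1000000
open scoped Fin.NatCast Fin.CommRing
lemma sum_shift {n : ℕ} [NeZero n] {M : Type*} [AddCommMonoid M] (h : Fin n → M) :
    ∑ j : Fin n, h (j + 1) = ∑ j : Fin n, h j :=
  Fintype.sum_equiv (Equiv.addRight 1) _ _ (fun _ => rfl)

lemma L2 (n : ℕ) [NeZero n] (f g : Fin n → Fin n) :
    ∑ j : Fin n, (Wv n (g j) - Wv n (g (j+1))) * (Zv n (f j) + Zv n (f (j+1)))
      = ∑ j : Fin n, Wv n (g j) * (Zv n (f (j+1)) - Zv n (f (j-1))) := by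
  have h1 : ∑ j : Fin n, Wv n (g (j+1)) * (Zv n (f j) + Zv n (f (j+1)))
      = ∑ j : Fin n, Wv n (g j) * (Zv n (f (j-1)) + Zv n (f j)) := by
    rw [← sum_shift (fun j => Wv n (g j) * (Zv n (f (j-1)) + Zv n (f j)))]
    simp
  calc ∑ j : Fin n, (Wv n (g j) - Wv n (g (j+1))) * (Zv n (f j) + Zv n (f (j+1)))
      = ∑ j : Fin n, (Wv n (g j) * (Zv n (f j) + Zv n (f (j+1)))
          - Wv n (g (j+1)) * (Zv n (f j) + Zv n (f (j+1)))) := by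
        apply Finset.sum_congr rfl; intros; ring
    _ = ∑ j : Fin n, Wv n (g j) * (Zv n (f j) + Zv n (f (j+1)))
          - ∑ j : Fin n, Wv n (g (j+1)) * (Zv n (f j) + Zv n (f (j+1))) := by
        rw [Finset.sum_sub_distrib]
    _ = ∑ j : Fin n, Wv n (g j) * (Zv n (f j) + Zv n (f (j+1)))
          - ∑ j : Fin n, Wv n (g j) * (Zv n (f (j-1)) + Zv n (f j)) := by rw [h1]
    _ = ∑ j : Fin n, (Wv n (g j) * (Zv n (f j) + Zv n (f (j+1)))
          - Wv n (g j) * (Zv n (f (j-1)) + Zv n (f j))) := by rw [Finset.sum_sub_distrib]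
    _ = ∑ j : Fin n, Wv n (g j) * (Zv n (f (j+1)) - Zv n (f (j-1))) := by
        apply Finset.sum_congr rfl; intros; ring

lemma nu2Perm_eq (n : ℕ) [NeZero n] (σ τ : Equiv.Perm (Fin n)) :
    nu2Perm n σ τ
      = C (Complex.I / 4) * ∑ j : Fin n, Wv n (τ j) * (Zv n (σ (j+1)) - Zv n (σ (j-1))) := by
  rw [nu2Perm, nu2, map_mul, rename_C, map_sum, ← L2 n σ τ]
  congr 1
  apply Finset.sum_congr rfl
  intros j _
  simp [Zv, Wv]

lemma nu2_eq (n : ℕ) [NeZero n] :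
    nu2 n = C (Complex.I / 4) * ∑ j : Fin n, Wv n j * (Zv n (j+1) - Zv n (j-1)) := by
  rw [nu2]; rw [show (∑ j : Fin n, (Wv n j - Wv n (j + 1)) * (Zv n j + Zv n (j + 1))) = ∑ j : Fin n, (Wv n (id j) - Wv n (id (j+1))) * (Zv n (id j) + Zv n (id (j+1))) from rfl, L2 n id id]; rfl

def indPt (n : ℕ) (j₀ k₀ : Fin n) : Fin n ⊕ Fin n → ℂ :=
  Sum.elim (fun k => if k = k₀ then 1 else 0) (fun j => if j = j₀ then 1 else 0)

lemma eval_form (n : ℕ) [NeZero n] (g f₁ f₂ : Fin n → Fin n) (j₀ k₀ : Fin n) :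
    eval (indPt n j₀ k₀)
        (C (Complex.I / 4) * ∑ j : Fin n, Wv n (g j) * (Zv n (f₁ j) - Zv n (f₂ j)))
      = (Complex.I / 4) *
        ∑ j : Fin n, (if g j = j₀ then 1 else 0) *
          ((if f₁ j = k₀ then (1:ℂ) else 0) - (if f₂ j = k₀ then 1 else 0)) := by
  simp [Zv, Wv, indPt]

lemma pointwise (n : ℕ) [NeZero n] (σ τ : Equiv.Perm (Fin n))
    (h : nu2Perm n σ τ = nu2 n) (j k₀ : Fin n) :
    ((if σ (j+1) = k₀ then 1 else 0) - (if σ (j-1) = k₀ then (1:ℂ) else 0))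
      = (if τ j + 1 = k₀ then 1 else 0) - (if τ j - 1 = k₀ then 1 else 0) := by
  have h2 := congrArg (eval (indPt n (τ j) k₀)) h
  rw [nu2Perm_eq, nu2_eq, eval_form, eval_form] at h2
  have h3 := mul_left_cancel₀ (by simp [Complex.I_ne_zero] : (Complex.I/4 : ℂ) ≠ 0) h2
  simpa [EmbeddingLike.apply_eq_iff_eq, ite_mul, Finset.sum_ite_eq'] using h3

lemma add_one_ne_sub_one {n : ℕ} [NeZero n] (h4 : 4 ≤ n) (a : Fin n) : a + 1 ≠ a - 1 := by
  intro h
  have h2 : (a + 1) + 1 = a := by rw [h, sub_add_cancel]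
  have := congrArg Fin.val h2
  rw [Fin.val_add, Fin.val_add, Fin.val_one'] at this
  have hlt := a.isLt
  have h1n : 1 % n = 1 := Nat.mod_eq_of_lt (by omega)
  rw [h1n] at this
  rcases Nat.lt_or_ge (a.val + 1) n with hc | hc
  · rw [Nat.mod_eq_of_lt hc] at this
    rcases Nat.lt_or_ge (a.val + 1 + 1) n with hc2 | hc2
    · rw [Nat.mod_eq_of_lt hc2] at this; omega
    · have : (a.val + 1 + 1) % n = a.val + 1 + 1 - n := by
        rw [Nat.mod_eq_sub_mod (by omega), Nat.mod_eq_of_lt (by omega)]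
      omega
  · have ha : a.val + 1 = n := by omega
    rw [ha, Nat.mod_self] at this
    rw [Nat.mod_eq_of_lt (by omega)] at this
    omega

lemma cond_iff (n : ℕ) [NeZero n] (h4 : 4 ≤ n) (σ τ : Equiv.Perm (Fin n)) :
    nu2Perm n σ τ = nu2 n ↔ ∀ j, σ (j+1) = τ j + 1 ∧ σ (j-1) = τ j - 1 := by
  constructor
  · intro h j
    constructor
    · have hp := pointwise n σ τ h j (τ j + 1)
      rw [if_pos rfl, if_neg (Ne.symm (add_one_ne_sub_one h4 (τ j)))] at hp
      by_cases h1 : σ (j+1) = τ j + 1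
      · exact h1
      · exfalso
        rw [if_neg h1] at hp
        by_cases h2 : σ (j-1) = τ j + 1 <;> simp [h2] at hp <;> norm_num at hp
    · have hp := pointwise n σ τ h j (τ j - 1)
      rw [if_pos rfl, if_neg (add_one_ne_sub_one h4 (τ j))] at hp
      by_cases h1 : σ (j-1) = τ j - 1
      · exact h1
      · exfalso
        rw [if_neg h1] at hp
        by_cases h2 : σ (j+1) = τ j - 1 <;> simp [h2] at hp <;> norm_num at hp
  · intro h
    rw [nu2Perm_eq, nu2_eq]
    congr 1
    apply Fintype.sum_equiv τ
    intro j
    rw [(h j).1, (h j).2]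

variable {ℓ : ℕ} [NeZero ℓ]

lemma pair_val (q : Fin ℓ) (r : Fin 2) : (pairEquiv ℓ (q, r)).val = r.val + 2 * q.val := by
  simp [pairEquiv, finProdFinEquiv_apply_val]
lemma two_val (hl : 2 ≤ ℓ) : ((2 : Fin (2*ℓ)) : ℕ) = 2 := by
  have : ((2 : Fin (2*ℓ)) : ℕ) = 2 % (2*ℓ) := rfl
  rw [this, Nat.mod_eq_of_lt (by omega)]
lemma one_val (hl : 2 ≤ ℓ) : ((1 : Fin (2*ℓ)) : ℕ) = 1 := by
  rw [Fin.val_one', Nat.mod_eq_of_lt (by omega)]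
lemma P1 (hl : 2 ≤ ℓ) (q : Fin ℓ) (r : Fin 2) :
    pairEquiv ℓ (q, r) + 2 = pairEquiv ℓ (q + 1, r) := by
  apply Fin.ext
  rw [Fin.val_add, two_val hl, pair_val, pair_val, Fin.val_add, Fin.val_one',
    Nat.mod_eq_of_lt (show 1 < ℓ by omega)]
  have hq := q.isLt
  have hr := r.isLt
  rcases Nat.lt_or_ge (q.val + 1) ℓ with hc | hc
  · rw [Nat.mod_eq_of_lt hc, Nat.mod_eq_of_lt (by omega)]; ring
  · have hq' : q.val = ℓ - 1 := by omega
    have : (q.val + 1) % ℓ = 0 := by rw [show q.val + 1 = ℓ by omega, Nat.mod_self]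
    rw [this, show r.val + 2*q.val + 2 = r.val + 1*(2*ℓ) by ring_nf; omega,
      Nat.add_mul_mod_self_right, Nat.mod_eq_of_lt (by omega)]
    omega
lemma P2 (hl : 2 ≤ ℓ) (q : Fin ℓ) : pairEquiv ℓ (q, 0) + 1 = pairEquiv ℓ (q, 1) := by
  apply Fin.ext
  rw [Fin.val_add, one_val hl, pair_val, pair_val]
  have hq := q.isLt
  rw [Nat.mod_eq_of_lt (by simp; omega)]
  simp
  omega
lemma P3 (hl : 2 ≤ ℓ) (q : Fin ℓ) : pairEquiv ℓ (q, 1) + 1 = pairEquiv ℓ (q + 1, 0) := by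
  rw [← P2 hl q, add_assoc, show (1:Fin (2*ℓ))+1 = 2 from by norm_num, P1 hl q 0]
lemma P2' (hl : 2 ≤ ℓ) (q : Fin ℓ) : pairEquiv ℓ (q, 1) - 1 = pairEquiv ℓ (q, 0) := by
  rw [← P2 hl q, add_sub_cancel_right]
lemma P3' (hl : 2 ≤ ℓ) (q : Fin ℓ) : pairEquiv ℓ (q, 0) - 1 = pairEquiv ℓ (q - 1, 1) := by
  have h := P3 hl (q - 1)
  rw [sub_add_cancel] at h
  rw [← h, add_sub_cancel_right]
lemma P1k (hl : 2 ≤ ℓ) (k : ℕ) (q : Fin ℓ) (r : Fin 2) :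
    pairEquiv ℓ (q, r) + ((2*k : ℕ) : Fin (2*ℓ)) = pairEquiv ℓ (q + (k : Fin ℓ), r) := by
  induction k with
  | zero => simp
  | succ k ih =>
    have : ((2*(k+1) : ℕ) : Fin (2*ℓ)) = ((2*k : ℕ) : Fin (2*ℓ)) + 2 := by push_cast; ring
    rw [this, ← add_assoc, ih, P1 hl]
    congr 1
    push_cast
    ring
lemma zero_pair : (0 : Fin (2*ℓ)) = pairEquiv ℓ (0, 0) := by
  apply Fin.ext; rw [pair_val]; simp
lemma one_pair (hl : 2 ≤ ℓ) : (1 : Fin (2*ℓ)) = pairEquiv ℓ (0, 1) := by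
  apply Fin.ext; rw [pair_val, one_val hl]; simp

lemma Codd_pair (q : Fin ℓ) (r : Fin 2) :
    Codd ℓ (pairEquiv ℓ (q, r)) = pairEquiv ℓ (if r = 0 then 1 + q else q, r) := by
  by_cases hr : r = 0 <;>
    simp [Codd, Equiv.permCongr_apply, Equiv.prodCongrLeft, hr]
lemma Ceven_pair (q : Fin ℓ) (r : Fin 2) :
    Ceven ℓ (pairEquiv ℓ (q, r)) = pairEquiv ℓ (if r = 1 then 1 + q else q, r) := by
  by_cases hr : r = 1 <;>
    simp [Ceven, Equiv.permCongr_apply, Equiv.prodCongrLeft, hr]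
lemma delta1_pair (q : Fin ℓ) (r : Fin 2) :
    delta1 ℓ (pairEquiv ℓ (q, r)) = pairEquiv ℓ (q, 1 + r) := by
  simp [delta1, Equiv.permCongr_apply, Equiv.prodCongrRight]
lemma delta2_pair0 (hl : 2 ≤ ℓ) (q : Fin ℓ) :
    delta2 ℓ (pairEquiv ℓ (q, 0)) = pairEquiv ℓ (q - 1, 1) := by
  have hinv : ((Equiv.addLeft (1 : Fin (2*ℓ)))⁻¹ : Equiv.Perm (Fin (2*ℓ)))
      (pairEquiv ℓ (q, 0)) = pairEquiv ℓ (q, 0) - 1 := by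
    simp [Equiv.Perm.inv_def, sub_eq_add_neg, add_comm]
  rw [delta2, Equiv.Perm.mul_apply, Equiv.Perm.mul_apply, hinv, P3' hl, delta1_pair]
  rw [show ((1:Fin 2) + 1) = 0 from rfl]
  show (1 : Fin (2*ℓ)) + pairEquiv ℓ (q - 1, 0) = _
  rw [add_comm, P2 hl]
lemma delta2_pair1 (hl : 2 ≤ ℓ) (q : Fin ℓ) :
    delta2 ℓ (pairEquiv ℓ (q, 1)) = pairEquiv ℓ (q + 1, 0) := by
  have hinv : ((Equiv.addLeft (1 : Fin (2*ℓ)))⁻¹ : Equiv.Perm (Fin (2*ℓ)))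
      (pairEquiv ℓ (q, 1)) = pairEquiv ℓ (q, 1) - 1 := by
    simp [Equiv.Perm.inv_def, sub_eq_add_neg, add_comm]
  rw [delta2, Equiv.Perm.mul_apply, Equiv.Perm.mul_apply, hinv, P2' hl, delta1_pair]
  rw [show ((1:Fin 2) + 0) = 1 from rfl]
  show (1 : Fin (2*ℓ)) + pairEquiv ℓ (q, 1) = _
  rw [add_comm, P3 hl]

def IsComm (ℓ : ℕ) [NeZero ℓ] (F : Fin (2*ℓ) → Fin (2*ℓ)) : Prop :=
  ∀ j, F (j + 2) = F j + 2

lemma comm_of_pair (hl : 2 ≤ ℓ) (F : Fin (2*ℓ) → Fin (2*ℓ))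
    (h : ∀ q r, F (pairEquiv ℓ (q+1, r)) = F (pairEquiv ℓ (q, r)) + 2) : IsComm ℓ F := by
  intro j
  obtain ⟨⟨q, r⟩, rfl⟩ := (pairEquiv ℓ).surjective j
  rw [P1 hl, h]
lemma comm_Codd (hl : 2 ≤ ℓ) : IsComm ℓ ⇑(Codd ℓ) := by
  apply comm_of_pair hl
  intro q r
  by_cases hr : r = 0
  · rw [Codd_pair, Codd_pair, if_pos hr, if_pos hr, P1 hl,
      show 1 + (q + 1) = (1 + q) + 1 from by ring]
  · rw [Codd_pair, Codd_pair, if_neg hr, if_neg hr, P1 hl]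
lemma comm_Ceven (hl : 2 ≤ ℓ) : IsComm ℓ ⇑(Ceven ℓ) := by
  apply comm_of_pair hl
  intro q r
  by_cases hr : r = 1
  · rw [Ceven_pair, Ceven_pair, if_pos hr, if_pos hr, P1 hl,
      show 1 + (q + 1) = (1 + q) + 1 from by ring]
  · rw [Ceven_pair, Ceven_pair, if_neg hr, if_neg hr, P1 hl]
lemma comm_delta1 (hl : 2 ≤ ℓ) : IsComm ℓ ⇑(delta1 ℓ) := by
  apply comm_of_pair hl
  intro q r
  rw [delta1_pair, delta1_pair, P1 hl]
lemma comm_delta2 (hl : 2 ≤ ℓ) : IsComm ℓ ⇑(delta2 ℓ) := by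
  apply comm_of_pair hl
  intro q r
  rcases (show r = 0 ∨ r = 1 by omega) with hr | hr <;> subst hr
  · rw [delta2_pair0 hl, delta2_pair0 hl, P1 hl,
      show q + 1 - 1 = (q - 1) + 1 from by ring]
  · rw [delta2_pair1 hl, delta2_pair1 hl, P1 hl]
lemma comm_mul {F G : Fin (2*ℓ) → Fin (2*ℓ)} (hF : IsComm ℓ F) (hG : IsComm ℓ G) :
    IsComm ℓ (F ∘ G) := fun j => by simp [Function.comp, hG j, hF (G j)]
lemma comm_perm_mul {σ π : Equiv.Perm (Fin (2*ℓ))} (hσ : IsComm ℓ ⇑σ) (hπ : IsComm ℓ ⇑π) :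
    IsComm ℓ ⇑(σ * π) := fun j => by
  rw [Equiv.Perm.mul_apply, Equiv.Perm.mul_apply, hπ j, hσ (π j)]
lemma comm_pow {σ : Equiv.Perm (Fin (2*ℓ))} (hσ : IsComm ℓ ⇑σ) (k : ℕ) :
    IsComm ℓ ⇑(σ ^ k) := by
  induction k with
  | zero => intro j; simp
  | succ k ih => rw [pow_succ]; exact comm_perm_mul ih hσ
lemma comm_iterate {F : Fin (2*ℓ) → Fin (2*ℓ)} (hF : IsComm ℓ F) (k : ℕ) (j : Fin (2*ℓ)) :
    F (j + ((2*k : ℕ) : Fin (2*ℓ))) = F j + ((2*k : ℕ) : Fin (2*ℓ)) := by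
  induction k with
  | zero => simp
  | succ k ih =>
    have h2 : ((2*(k+1) : ℕ) : Fin (2*ℓ)) = ((2*k : ℕ) : Fin (2*ℓ)) + 2 := by push_cast; ring
    rw [h2, ← add_assoc, hF, ih, add_assoc]
lemma comm_ext (hl : 2 ≤ ℓ) {F G : Fin (2*ℓ) → Fin (2*ℓ)}
    (hF : IsComm ℓ F) (hG : IsComm ℓ G) (h0 : F 0 = G 0) (h1 : F 1 = G 1) :
    ∀ j, F j = G j := by
  intro j
  have hj : j = ((j.val % 2 : ℕ) : Fin (2*ℓ)) + ((2 * (j.val / 2) : ℕ) : Fin (2*ℓ)) := by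
    rw [← Nat.cast_add, show j.val % 2 + 2 * (j.val / 2) = j.val from by omega,
      Fin.cast_val_eq_self]
  rw [hj, comm_iterate hF, comm_iterate hG]
  have : j.val % 2 = 0 ∨ j.val % 2 = 1 := by omega
  rcases this with h | h <;> rw [h]
  · rw [Nat.cast_zero, h0]
  · rw [Nat.cast_one, h1]

lemma Codd_pow_pair (u : ℕ) : ∀ (q : Fin ℓ) (r : Fin 2),
    (Codd ℓ ^ u) (pairEquiv ℓ (q, r))
      = pairEquiv ℓ (if r = 0 then (u : Fin ℓ) + q else q, r) := by
  induction u with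
  | zero => intro q r; simp
  | succ u ih =>
    intro q r
    rw [pow_succ, Equiv.Perm.mul_apply, Codd_pair]
    by_cases hr : r = 0
    · rw [if_pos hr, if_pos hr, ih, if_pos hr,
        show (u : Fin ℓ) + (1 + q) = ((u+1 : ℕ) : Fin ℓ) + q from by push_cast; ring]
    · rw [if_neg hr, if_neg hr, ih, if_neg hr]

lemma Ceven_pow_pair (v : ℕ) : ∀ (q : Fin ℓ) (r : Fin 2),
    (Ceven ℓ ^ v) (pairEquiv ℓ (q, r))
      = pairEquiv ℓ (if r = 1 then (v : Fin ℓ) + q else q, r) := by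
  induction v with
  | zero => intro q r; simp
  | succ v ih =>
    intro q r
    rw [pow_succ, Equiv.Perm.mul_apply, Ceven_pair]
    by_cases hr : r = 1
    · rw [if_pos hr, if_pos hr, ih, if_pos hr,
        show (v : Fin ℓ) + (1 + q) = ((v+1 : ℕ) : Fin ℓ) + q from by push_cast; ring]
    · rw [if_neg hr, if_neg hr, ih, if_neg hr]

lemma CC_pair (u v : ℕ) (q : Fin ℓ) (r : Fin 2) :
    (Codd ℓ ^ u * Ceven ℓ ^ v) (pairEquiv ℓ (q, r))
      = pairEquiv ℓ (if r = 0 then (u : Fin ℓ) + q else (v : Fin ℓ) + q, r) := by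
  rw [Equiv.Perm.mul_apply, Ceven_pow_pair]
  rcases (show r = 0 ∨ r = 1 by omega) with hr | hr <;> subst hr
  · rw [if_neg (by omega), Codd_pow_pair, if_pos rfl, if_pos rfl]
  · rw [if_pos rfl, Codd_pow_pair, if_neg (by omega), if_neg (by omega)]

lemma comm_CC (hl : 2 ≤ ℓ) (u v : ℕ) : IsComm ℓ ⇑(Codd ℓ ^ u * Ceven ℓ ^ v) :=
  comm_perm_mul (comm_pow (comm_Codd hl) u) (comm_pow (comm_Ceven hl) v)

lemma comm_DCC (hl : 2 ≤ ℓ) (u v : ℕ) :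
    IsComm ℓ ⇑(delta1 ℓ * (Codd ℓ ^ u * Ceven ℓ ^ v)) :=
  comm_perm_mul (comm_delta1 hl) (comm_CC hl u v)

lemma one_one_pair (hl : 2 ≤ ℓ) : (1 : Fin (2*ℓ)) + 1 = pairEquiv ℓ (1, 0) := by
  nth_rewrite 1 [one_pair hl]
  rw [P3 hl, zero_add]

lemma M1 (hl : 2 ≤ ℓ) (u v : ℕ) :
    ∀ j, (Codd ℓ ^ u * Ceven ℓ ^ v) (j + 1) = (Codd ℓ ^ v * Ceven ℓ ^ u) j + 1 := by
  have hσ := comm_CC hl u v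
  have hτ := comm_CC hl v u
  apply comm_ext hl (F := fun j => (Codd ℓ ^ u * Ceven ℓ ^ v) (j + 1))
    (G := fun j => (Codd ℓ ^ v * Ceven ℓ ^ u) j + 1)
  · intro j
    show (Codd ℓ ^ u * Ceven ℓ ^ v) (j + 2 + 1) = _
    rw [show j + 2 + 1 = (j + 1) + 2 from by ring, hσ]
  · intro j
    show (Codd ℓ ^ v * Ceven ℓ ^ u) (j + 2) + 1 = _
    rw [hτ j, add_right_comm]
  · show (Codd ℓ ^ u * Ceven ℓ ^ v) (0 + 1) = (Codd ℓ ^ v * Ceven ℓ ^ u) 0 + 1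
    have e1 : (Codd ℓ ^ u * Ceven ℓ ^ v) (0 + 1) = pairEquiv ℓ ((v : Fin ℓ), 1) := by
      rw [zero_add, one_pair hl, CC_pair, if_neg (by omega), add_zero]
    have e2 : (Codd ℓ ^ v * Ceven ℓ ^ u) 0 = pairEquiv ℓ ((v : Fin ℓ), 0) := by
      rw [zero_pair, CC_pair, if_pos rfl, add_zero]
    rw [e1, e2, P2 hl]
  · show (Codd ℓ ^ u * Ceven ℓ ^ v) (1 + 1) = (Codd ℓ ^ v * Ceven ℓ ^ u) 1 + 1
    have e1 : (Codd ℓ ^ u * Ceven ℓ ^ v) (1 + 1) = pairEquiv ℓ ((u : Fin ℓ) + 1, 0) := by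
      rw [one_one_pair hl, CC_pair, if_pos rfl]
    have e2 : (Codd ℓ ^ v * Ceven ℓ ^ u) 1 = pairEquiv ℓ ((u : Fin ℓ), 1) := by
      rw [one_pair hl, CC_pair, if_neg (by omega), add_zero]
    rw [e1, e2, P3 hl]

lemma M2 (hl : 2 ≤ ℓ) (u v : ℕ) :
    ∀ j, (delta1 ℓ * (Codd ℓ ^ u * Ceven ℓ ^ v)) (j + 1)
      = (delta2 ℓ * (Codd ℓ ^ v * Ceven ℓ ^ u)) j + 1 := by
  have hσ := comm_DCC hl u v
  have hτ : IsComm ℓ ⇑(delta2 ℓ * (Codd ℓ ^ v * Ceven ℓ ^ u)) :=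
    comm_perm_mul (comm_delta2 hl) (comm_CC hl v u)
  apply comm_ext hl (F := fun j => (delta1 ℓ * (Codd ℓ ^ u * Ceven ℓ ^ v)) (j + 1))
    (G := fun j => (delta2 ℓ * (Codd ℓ ^ v * Ceven ℓ ^ u)) j + 1)
  · intro j
    show (delta1 ℓ * (Codd ℓ ^ u * Ceven ℓ ^ v)) (j + 2 + 1) = _
    rw [show j + 2 + 1 = (j + 1) + 2 from by ring, hσ]
  · intro j
    show (delta2 ℓ * (Codd ℓ ^ v * Ceven ℓ ^ u)) (j + 2) + 1 = _
    rw [hτ j, add_right_comm]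
  · show (delta1 ℓ * (Codd ℓ ^ u * Ceven ℓ ^ v)) (0 + 1)
        = (delta2 ℓ * (Codd ℓ ^ v * Ceven ℓ ^ u)) 0 + 1
    have e1 : (delta1 ℓ * (Codd ℓ ^ u * Ceven ℓ ^ v)) (0 + 1)
        = pairEquiv ℓ ((v : Fin ℓ), 0) := by
      rw [zero_add, one_pair hl, Equiv.Perm.mul_apply, CC_pair, if_neg (by omega), add_zero,
        delta1_pair, show ((1:Fin 2) + 1) = 0 from rfl]
    have e2 : (delta2 ℓ * (Codd ℓ ^ v * Ceven ℓ ^ u)) 0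
        = pairEquiv ℓ ((v : Fin ℓ) - 1, 1) := by
      rw [zero_pair, Equiv.Perm.mul_apply, CC_pair, if_pos rfl, add_zero, delta2_pair0 hl]
    rw [e1, e2, P3 hl, sub_add_cancel]
  · show (delta1 ℓ * (Codd ℓ ^ u * Ceven ℓ ^ v)) (1 + 1)
        = (delta2 ℓ * (Codd ℓ ^ v * Ceven ℓ ^ u)) 1 + 1
    have e1 : (delta1 ℓ * (Codd ℓ ^ u * Ceven ℓ ^ v)) (1 + 1)
        = pairEquiv ℓ ((u : Fin ℓ) + 1, 1) := by
      rw [one_one_pair hl, Equiv.Perm.mul_apply, CC_pair, if_pos rfl, delta1_pair,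
        show ((1:Fin 2) + 0) = 1 from rfl]
    have e2 : (delta2 ℓ * (Codd ℓ ^ v * Ceven ℓ ^ u)) 1
        = pairEquiv ℓ ((u : Fin ℓ) + 1, 0) := by
      rw [one_pair hl, Equiv.Perm.mul_apply, CC_pair, if_neg (by omega), add_zero,
        delta2_pair1 hl]
    rw [e1, e2, P2 hl]

lemma cond_of (hl : 2 ≤ ℓ) (σ τ : Equiv.Perm (Fin (2*ℓ))) (hσ : IsComm ℓ ⇑σ)
    (h1 : ∀ j, σ (j+1) = τ j + 1) : ∀ j, σ (j+1) = τ j + 1 ∧ σ (j-1) = τ j - 1 := by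
  intro j
  refine ⟨h1 j, ?_⟩
  have h2 := hσ (j - 1)
  rw [show j - 1 + 2 = j + 1 from by ring, h1 j] at h2
  have h3 : σ (j-1) = τ j + 1 - 2 := eq_sub_iff_add_eq.mpr h2.symm
  rw [h3]
  ring

lemma opp_parity (hl : 2 ≤ ℓ) (σ : Equiv.Perm (Fin (2*ℓ))) (hσ : IsComm ℓ ⇑σ)
    (a b : Fin ℓ) (s : Fin 2) (h0 : σ 0 = pairEquiv ℓ (a, s)) (h1 : σ 1 = pairEquiv ℓ (b, s)) :
    False := by
  have hb : a + ((b - a).val : Fin ℓ) = b := by rw [Fin.cast_val_eq_self]; ring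
  have hiter := comm_iterate hσ (b - a).val 0
  rw [zero_add] at hiter
  have heq : σ (((2 * (b - a).val : ℕ) : Fin (2*ℓ))) = σ 1 := by
    rw [hiter, h0, P1k hl, hb, h1]
  have h2 : ((2 * (b - a).val : ℕ) : Fin (2*ℓ)) = 1 := σ.injective heq
  have hval := congrArg Fin.val h2
  rw [Fin.val_natCast, one_val hl, Nat.mul_mod_mul_left] at hval
  omega

/-- For even `n = 2ℓ`, the stabilizer of `ν₂` in `Sₙ × Sₙ` consists of the pairs
`(C₁ᵘC₂ᵛ, C₁ᵛC₂ᵘ)` and `(δ₁C₁ᵘC₂ᵛ, δ₂C₁ᵛC₂ᵘ)`, `0 ≤ u, v ≤ ℓ−1`. -/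
theorem statement12 (ℓ : ℕ) [NeZero ℓ] (hl : 2 ≤ ℓ)
    (σ τ : Equiv.Perm (Fin (2 * ℓ))) :
    nu2Perm (2 * ℓ) σ τ = nu2 (2 * ℓ) ↔
      ∃ u v : ℕ, u ≤ ℓ - 1 ∧ v ≤ ℓ - 1 ∧
        ((σ = Codd ℓ ^ u * Ceven ℓ ^ v ∧ τ = Codd ℓ ^ v * Ceven ℓ ^ u) ∨
         (σ = delta1 ℓ * (Codd ℓ ^ u * Ceven ℓ ^ v) ∧
          τ = delta2 ℓ * (Codd ℓ ^ v * Ceven ℓ ^ u))) := by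
  have h4 : 4 ≤ 2*ℓ := by omega
  rw [cond_iff (2*ℓ) h4 σ τ]
  constructor
  · intro cond
    have hστ : ∀ j, σ (j+1) = τ j + 1 := fun j => (cond j).1
    have hσc : IsComm ℓ ⇑σ := by
      intro j
      have a1 := (cond (j+1)).1
      have a2 := (cond (j+1)).2
      rw [add_sub_cancel_right] at a2
      rw [show j + 2 = (j+1)+1 from by ring, a1, a2]
      ring
    obtain ⟨⟨a, s⟩, h0⟩ := (pairEquiv ℓ).surjective (σ 0)
    obtain ⟨⟨b, t⟩, h1⟩ := (pairEquiv ℓ).surjective (σ 1)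
    have hst : s ≠ t := by
      intro h
      subst h
      exact opp_parity hl σ hσc a b s h0.symm h1.symm
    rcases (show s = 0 ∨ s = 1 by omega) with hs | hs <;> subst hs
    · have ht : t = 1 := by omega
      subst ht
      have hσeq : σ = Codd ℓ ^ a.val * Ceven ℓ ^ b.val := by
        apply Equiv.ext
        apply comm_ext hl hσc (comm_CC hl a.val b.val)
        · have e : (Codd ℓ ^ a.val * Ceven ℓ ^ b.val) 0 = pairEquiv ℓ (a, 0) := by
            rw [zero_pair, CC_pair, if_pos rfl, add_zero, Fin.cast_val_eq_self]
          rw [e]; exact h0.symm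
        · have e : (Codd ℓ ^ a.val * Ceven ℓ ^ b.val) 1 = pairEquiv ℓ (b, 1) := by
            rw [one_pair hl, CC_pair, if_neg (by omega), add_zero, Fin.cast_val_eq_self]
          rw [e]; exact h1.symm
      refine ⟨a.val, b.val, by have := a.isLt; omega, by have := b.isLt; omega,
        Or.inl ⟨hσeq, ?_⟩⟩
      apply Equiv.ext
      intro j
      have h := hστ j
      rw [hσeq, M1 hl a.val b.val j] at h
      exact (add_right_cancel h.symm)
    · have ht : t = 0 := by omega
      subst ht
      have hσeq : σ = delta1 ℓ * (Codd ℓ ^ a.val * Ceven ℓ ^ b.val) := by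
        apply Equiv.ext
        apply comm_ext hl hσc (comm_DCC hl a.val b.val)
        · have e : (delta1 ℓ * (Codd ℓ ^ a.val * Ceven ℓ ^ b.val)) 0 = pairEquiv ℓ (a, 1) := by
            rw [zero_pair, Equiv.Perm.mul_apply, CC_pair, if_pos rfl, add_zero,
              Fin.cast_val_eq_self, delta1_pair, show ((1:Fin 2) + 0) = 1 from rfl]
          rw [e]; exact h0.symm
        · have e : (delta1 ℓ * (Codd ℓ ^ a.val * Ceven ℓ ^ b.val)) 1 = pairEquiv ℓ (b, 0) := by
            rw [one_pair hl, Equiv.Perm.mul_apply, CC_pair, if_neg (by omega), add_zero,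
              Fin.cast_val_eq_self, delta1_pair, show ((1:Fin 2) + 1) = 0 from rfl]
          rw [e]; exact h1.symm
      refine ⟨a.val, b.val, by have := a.isLt; omega, by have := b.isLt; omega,
        Or.inr ⟨hσeq, ?_⟩⟩
      apply Equiv.ext
      intro j
      have h := hστ j
      rw [hσeq, M2 hl a.val b.val j] at h
      exact (add_right_cancel h.symm)
  · rintro ⟨u, v, hu, hv, ⟨hσe, hτe⟩ | ⟨hσe, hτe⟩⟩ <;> subst hσe <;> subst hτe
    · exact cond_of hl _ _ (comm_CC hl u v) (M1 hl u v)
    · exact cond_of hl _ _ (comm_DCC hl u v) (M2 hl u v)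
end
end

section
/- The ℂ-linear span of the set of matrices { M_{(σ,τ)} : σ, τ ∈ Sₙ } inside the space of n×n complex matrices equals the subspace of all n×n complex matrices A such that every row sum of A is zero and every column sum of A is zero. -/
open Finset Matrix

noncomputable section

/-- The matrix `M₀` with `(M₀)_{a,b} = 1` if `b ≡ a+1 (mod n)`, `= −1` if `b ≡ a−1 (mod n)`,
and `0` otherwise. -/
def M0 (n : ℕ) [NeZero n] : Matrix (Fin n) (Fin n) ℂ :=
  fun a b => if b = a + 1 then 1 else if b = a - 1 then -1 else 0

/-- The permutation matrix of `σ`: `P(σ)_{a,b} = 1` iff `b = σ(a)`. -/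
def Pmat (n : ℕ) (σ : Equiv.Perm (Fin n)) : Matrix (Fin n) (Fin n) ℂ :=
  fun a b => if b = σ a then 1 else 0

/-- The matrix `M_{(σ,τ)} = P(σ)ᵀ · M₀ · P(τ)` of the bilinear form `ν₂^{(σ,τ)}`
(up to the scalar `i/4`). -/
def Mmat (n : ℕ) [NeZero n] (σ τ : Equiv.Perm (Fin n)) : Matrix (Fin n) (Fin n) ℂ :=
  (Pmat n σ)ᵀ * M0 n * Pmat n τ

section Aux

variable {n : ℕ} [NeZero n]

open scoped Fin.NatCast Fin.CommRing

lemma fin_two_ne_zero (hn : 3 ≤ n) : (2 : Fin n) ≠ 0 := by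
  have : ((2:ℕ) : Fin n) ≠ 0 := by
    rw [Ne, Fin.natCast_eq_zero]
    exact fun h => absurd (Nat.le_of_dvd two_pos h) (by omega)
  simpa using this

lemma fin_one_ne_zero' (hn : 3 ≤ n) : (1 : Fin n) ≠ 0 := by
  have : ((1:ℕ) : Fin n) ≠ 0 := by
    rw [Ne, Fin.natCast_eq_zero]
    exact fun h => absurd (Nat.le_of_dvd one_pos h) (by omega)
  simpa using this

lemma fin_zero_ne_two (hn : 3 ≤ n) : (0 : Fin n) ≠ 2 := (fin_two_ne_zero hn).symm

lemma fin_one_ne_three (hn : 3 ≤ n) : (1 : Fin n) ≠ 3 := by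
  intro h
  have h2 : (2 : Fin n) = 0 := by
    have : (3 : Fin n) - 1 = 2 := by ring
    rw [← h] at this
    simpa using this.symm
  exact fin_two_ne_zero hn h2

lemma fin_three_eq_neg_one_iff (hn : 3 ≤ n) : (3 : Fin n) = -1 ↔ n = 4 := by
  constructor
  · intro h
    have h4 : (4 : Fin n) = 0 := by
      have := congrArg (· + 1) h
      simpa [show (3:Fin n)+1 = 4 by ring] using this
    have hd : ((4:ℕ) : Fin n) = 0 := by simpa using h4
    rw [Fin.natCast_eq_zero] at hd
    have h16 := Nat.le_of_dvd (by norm_num) hd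
    interval_cases n <;> omega
  · rintro rfl
    rfl

lemma Mmat_apply (σ τ : Equiv.Perm (Fin n)) (x y : Fin n) :
    Mmat n σ τ x y = M0 n (σ⁻¹ x) (τ⁻¹ y) := by
  have h1 : ∀ (B : Matrix (Fin n) (Fin n) ℂ) (y : Fin n),
      ((Pmat n σ)ᵀ * B) x y = B (σ⁻¹ x) y := by
    intro B y
    rw [Matrix.mul_apply]
    rw [Finset.sum_eq_single (σ⁻¹ x)]
    · simp [Pmat, Matrix.transpose_apply]
    · intro i _ hi
      have : x ≠ σ i := by
        intro h; exact hi (by simp [h])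
      simp [Pmat, Matrix.transpose_apply, this]
    · simp
  have h2 : ∀ B : Matrix (Fin n) (Fin n) ℂ, (B * Pmat n τ) x y = B x (τ⁻¹ y) := by
    intro B
    rw [Matrix.mul_apply]
    rw [Finset.sum_eq_single (τ⁻¹ y)]
    · simp [Pmat]
    · intro j _ hj
      have : y ≠ τ j := by
        intro h; exact hj (by simp [h])
      simp [Pmat, this]
    · simp
  rw [Mmat, h2, h1]

lemma add_ne_sub (hn : 3 ≤ n) (a : Fin n) : a + 1 ≠ a - 1 := by
  intro h
  have h2 : (2 : Fin n) = 0 := by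
    have : (a + 1) - (a - 1) = 2 := by ring
    rw [h] at this
    simpa using this.symm
  have : ((2:ℕ) : Fin n) = 0 := by simpa using h2
  rw [Fin.natCast_eq_zero] at this
  exact absurd (Nat.le_of_dvd two_pos this) (by omega)

lemma M0_row_sum (hn : 3 ≤ n) (a : Fin n) : ∑ b, M0 n a b = 0 := by
  have key := add_ne_sub hn a
  have : ∀ b, M0 n a b
      = (if b = a + 1 then (1:ℂ) else 0) + (if b = a - 1 then (-1:ℂ) else 0) := by
    intro b
    simp only [M0]
    by_cases h1 : b = a + 1
    · have hb : ¬ b = a - 1 := fun h => key (h1.symm.trans h)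
      rw [if_pos h1, if_pos h1, if_neg hb, add_zero]
    · by_cases h2 : b = a - 1
      · rw [if_neg h1, if_pos h2]; simp [h1]
      · rw [if_neg h1, if_neg h2]; simp [h1]
  rw [Finset.sum_congr rfl (fun b _ => this b), Finset.sum_add_distrib]
  simp

lemma M0_col_sum (hn : 3 ≤ n) (b : Fin n) : ∑ a, M0 n a b = 0 := by
  have key : b - 1 ≠ b + 1 := by
    intro h
    exact add_ne_sub hn b h.symm
  have : ∀ a, M0 n a b
      = (if a = b - 1 then (1:ℂ) else 0) + (if a = b + 1 then (-1:ℂ) else 0) := by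
    intro a
    have e1 : (b = a + 1) ↔ (a = b - 1) := by constructor <;> (intro h; subst h; ring)
    have e2 : (b = a - 1) ↔ (a = b + 1) := by constructor <;> (intro h; subst h; ring)
    simp only [M0]
    by_cases h1 : a = b - 1
    · have hb : ¬ a = b + 1 := fun h => key (h1.symm.trans h)
      rw [if_pos (e1.mpr h1), if_pos h1, if_neg hb, add_zero]
    · by_cases h2 : a = b + 1
      · rw [if_neg (fun h => h1 (e1.mp h)), if_pos (e2.mpr h2), if_neg h1, if_pos h2, zero_add]
      · rw [if_neg (fun h => h1 (e1.mp h)), if_neg (fun h => h2 (e2.mp h)), if_neg h1,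
          if_neg h2, add_zero]
  rw [Finset.sum_congr rfl (fun a _ => this a), Finset.sum_add_distrib]
  simp

lemma M0_01 : M0 n 0 1 = 1 := by simp [M0]

lemma M0_03 (hn : 3 ≤ n) : M0 n 0 3 = if n = 4 then -1 else 0 := by
  have h1 : (3 : Fin n) ≠ 0 + 1 := by
    rw [zero_add]; exact (fin_one_ne_three hn).symm
  by_cases h4 : n = 4
  · have : (3 : Fin n) = 0 - 1 := by
      rw [zero_sub]; exact (fin_three_eq_neg_one_iff hn).mpr h4
    simp only [M0]
    rw [if_neg h1, if_pos this, if_pos h4]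
  · have : (3 : Fin n) ≠ 0 - 1 := by
      rw [zero_sub]
      exact fun h => h4 ((fin_three_eq_neg_one_iff hn).mp h)
    simp only [M0]
    rw [if_neg h1, if_neg this, if_neg h4]

lemma M0_21 (hn : 3 ≤ n) : M0 n 2 1 = -1 := by
  have h1 : (1 : Fin n) ≠ 2 + 1 := by
    rw [show (2:Fin n)+1 = 3 by ring]; exact fin_one_ne_three hn
  have h2 : (1 : Fin n) = 2 - 1 := by ring
  simp only [M0]
  rw [if_neg h1, if_pos h2]

lemma M0_23 : M0 n 2 3 = 1 := by
  have h1 : (3 : Fin n) = 2 + 1 := by ring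
  simp only [M0]
  rw [if_pos h1]

lemma key_identity (hn : 3 ≤ n) (p q : Fin n) :
    M0 n p q - M0 n (Equiv.swap 0 2 p) q - M0 n p (Equiv.swap 1 3 q)
      + M0 n (Equiv.swap 0 2 p) (Equiv.swap 1 3 q)
    = (if n = 4 then (4:ℂ) else 3) *
      (((if p = 0 then (1:ℂ) else 0) - if p = 2 then 1 else 0) *
       ((if q = 1 then (1:ℂ) else 0) - if q = 3 then 1 else 0)) := by
  have h02 : (0:Fin n) ≠ 2 := fin_zero_ne_two hn
  have h13 : (1:Fin n) ≠ 3 := fin_one_ne_three hn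
  by_cases hp0 : p = 0
  · subst hp0
    rw [Equiv.swap_apply_left, if_pos rfl, if_neg h02]
    by_cases hq1 : q = 1
    · subst hq1
      rw [Equiv.swap_apply_left, if_pos rfl, if_neg h13,
        M0_01, M0_21 hn, M0_03 hn, M0_23]
      by_cases h4 : n = 4 <;> simp [h4] <;> ring
    · by_cases hq3 : q = 3
      · subst hq3
        rw [Equiv.swap_apply_right, if_neg h13.symm, if_pos rfl,
          M0_01, M0_21 hn, M0_03 hn, M0_23]
        by_cases h4 : n = 4 <;> simp [h4] <;> ring
      · rw [Equiv.swap_apply_of_ne_of_ne hq1 hq3, if_neg hq1, if_neg hq3]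
        ring
  · by_cases hp2 : p = 2
    · subst hp2
      rw [Equiv.swap_apply_right, if_neg h02.symm, if_pos rfl]
      by_cases hq1 : q = 1
      · subst hq1
        rw [Equiv.swap_apply_left, if_pos rfl, if_neg h13,
          M0_01, M0_21 hn, M0_03 hn, M0_23]
        by_cases h4 : n = 4 <;> simp [h4] <;> ring
      · by_cases hq3 : q = 3
        · subst hq3
          rw [Equiv.swap_apply_right, if_neg h13.symm, if_pos rfl,
            M0_01, M0_21 hn, M0_03 hn, M0_23]
          by_cases h4 : n = 4 <;> simp [h4] <;> ring
        · rw [Equiv.swap_apply_of_ne_of_ne hq1 hq3, if_neg hq1, if_neg hq3]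
          ring
    · rw [Equiv.swap_apply_of_ne_of_ne hp0 hp2, if_neg hp0, if_neg hp2]
      ring

/-- The double-difference matrices lie in the span. -/
lemma Dmem (hn : 3 ≤ n) (a b : Fin n) :
    (Matrix.of fun x y =>
        ((if x = a then (1:ℂ) else 0) - if x = 0 then 1 else 0) *
        ((if y = b then (1:ℂ) else 0) - if y = 0 then 1 else 0))
      ∈ Submodule.span ℂ {A : Matrix (Fin n) (Fin n) ℂ |
          ∃ σ τ : Equiv.Perm (Fin n), A = Mmat n σ τ} := by
  by_cases ha : a = 0
  · subst ha
    have h0 : (Matrix.of fun x y =>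
        ((if x = (0:Fin n) then (1:ℂ) else 0) - if x = 0 then 1 else 0) *
        ((if y = b then (1:ℂ) else 0) - if y = 0 then 1 else 0)) = 0 := by
      ext x y
      simp [sub_self]
    rw [h0]
    exact Submodule.zero_mem _
  by_cases hb : b = 0
  · subst hb
    have h0 : (Matrix.of fun x y =>
        ((if x = a then (1:ℂ) else 0) - if x = 0 then 1 else 0) *
        ((if y = (0:Fin n) then (1:ℂ) else 0) - if y = 0 then 1 else 0)) = 0 := by
      ext x y
      simp [sub_self]
    rw [h0]
    exact Submodule.zero_mem _
  -- main case
  have h02 : (0:Fin n) ≠ 2 := fin_zero_ne_two hn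
  have h13 : (1:Fin n) ≠ 3 := fin_one_ne_three hn
  have h10 : (1:Fin n) ≠ 0 := fin_one_ne_zero' hn
  obtain ⟨σ, hσ0, hσ2⟩ : ∃ σ : Equiv.Perm (Fin n), σ 0 = a ∧ σ 2 = 0 := by
    refine ⟨Equiv.swap 2 a * Equiv.swap 0 2, ?_, ?_⟩
    · rw [Equiv.Perm.mul_apply, Equiv.swap_apply_left, Equiv.swap_apply_left]
    · rw [Equiv.Perm.mul_apply, Equiv.swap_apply_right,
        Equiv.swap_apply_of_ne_of_ne h02 (fun h => ha h.symm)]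
  obtain ⟨τ, hτ1, hτ3⟩ : ∃ τ : Equiv.Perm (Fin n), τ 1 = b ∧ τ 3 = 0 := by
    refine ⟨Equiv.swap 1 b * Equiv.swap 3 0, ?_, ?_⟩
    · rw [Equiv.Perm.mul_apply, Equiv.swap_apply_of_ne_of_ne h13 h10,
        Equiv.swap_apply_left]
    · rw [Equiv.Perm.mul_apply, Equiv.swap_apply_left,
        Equiv.swap_apply_of_ne_of_ne h10.symm (fun h => hb h.symm)]
  set c : ℂ := if n = 4 then (4:ℂ) else 3 with hc_def
  have hc : c ≠ 0 := by
    by_cases h4 : n = 4 <;> simp [hc_def, h4]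
  have hmem : Mmat n σ τ - Mmat n (σ * Equiv.swap 0 2) τ
      - Mmat n σ (τ * Equiv.swap 1 3)
      + Mmat n (σ * Equiv.swap 0 2) (τ * Equiv.swap 1 3)
      ∈ Submodule.span ℂ {A : Matrix (Fin n) (Fin n) ℂ |
          ∃ σ τ : Equiv.Perm (Fin n), A = Mmat n σ τ} := by
    refine Submodule.add_mem _ (Submodule.sub_mem _ (Submodule.sub_mem _ ?_ ?_) ?_) ?_ <;>
      exact Submodule.subset_span ⟨_, _, rfl⟩
  have hrep : (Matrix.of fun x y =>
        ((if x = a then (1:ℂ) else 0) - if x = 0 then 1 else 0) *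
        ((if y = b then (1:ℂ) else 0) - if y = 0 then 1 else 0))
      = c⁻¹ • (Mmat n σ τ - Mmat n (σ * Equiv.swap 0 2) τ
          - Mmat n σ (τ * Equiv.swap 1 3)
          + Mmat n (σ * Equiv.swap 0 2) (τ * Equiv.swap 1 3)) := by
    ext x y
    have hinv1 : ((σ * Equiv.swap 0 2 : Equiv.Perm (Fin n))⁻¹) x = Equiv.swap 0 2 (σ⁻¹ x) := by
      rw [_root_.mul_inv_rev, Equiv.Perm.mul_apply, Equiv.swap_inv]
    have hinv2 : ((τ * Equiv.swap 1 3 : Equiv.Perm (Fin n))⁻¹) y = Equiv.swap 1 3 (τ⁻¹ y) := by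
      rw [_root_.mul_inv_rev, Equiv.Perm.mul_apply, Equiv.swap_inv]
    simp only [Matrix.smul_apply, Matrix.sub_apply, Matrix.add_apply, Matrix.of_apply,
      smul_eq_mul, Mmat_apply, hinv1, hinv2]
    rw [key_identity hn (σ⁻¹ x) (τ⁻¹ y), ← hc_def, inv_mul_cancel_left₀ hc]
    have e1 : (x = a) ↔ (σ⁻¹ x = 0) := by
      rw [Equiv.Perm.inv_eq_iff_eq, hσ0]
    have e2 : (x = (0:Fin n)) ↔ (σ⁻¹ x = 2) := by
      rw [Equiv.Perm.inv_eq_iff_eq, hσ2]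
    have e3 : (y = b) ↔ (τ⁻¹ y = 1) := by
      rw [Equiv.Perm.inv_eq_iff_eq, hτ1]
    have e4 : (y = (0:Fin n)) ↔ (τ⁻¹ y = 3) := by
      rw [Equiv.Perm.inv_eq_iff_eq, hτ3]
    rw [if_congr e1 rfl rfl, if_congr e2 rfl rfl, if_congr e3 rfl rfl, if_congr e4 rfl rfl]
  rw [hrep]
  exact Submodule.smul_mem _ _ hmem

end Aux

/-- The `ℂ`-linear span of the matrices `M_{(σ,τ)}` is exactly the space of matrices
all of whose row sums and column sums vanish. -/
theorem statement13 (n : ℕ) [NeZero n] (hn : 3 ≤ n) :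
    (Submodule.span ℂ {A : Matrix (Fin n) (Fin n) ℂ |
        ∃ σ τ : Equiv.Perm (Fin n), A = Mmat n σ τ} : Set (Matrix (Fin n) (Fin n) ℂ)) =
      {A : Matrix (Fin n) (Fin n) ℂ |
        (∀ a, ∑ b, A a b = 0) ∧ (∀ b, ∑ a, A a b = 0)} := by
  apply Set.Subset.antisymm
  · -- span ⊆ zero-sum matrices
    let V : Submodule ℂ (Matrix (Fin n) (Fin n) ℂ) :=
      { carrier := {A | (∀ a, ∑ b, A a b = 0) ∧ (∀ b, ∑ a, A a b = 0)}
        add_mem' := by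
          rintro A B ⟨hA1, hA2⟩ ⟨hB1, hB2⟩
          constructor
          · intro a
            simp [Matrix.add_apply, Finset.sum_add_distrib, hA1 a, hB1 a]
          · intro b
            simp [Matrix.add_apply, Finset.sum_add_distrib, hA2 b, hB2 b]
        zero_mem' := by
          constructor <;> intro i <;> simp
        smul_mem' := by
          rintro u A ⟨hA1, hA2⟩
          constructor
          · intro a
            simp [Matrix.smul_apply, ← Finset.mul_sum, hA1 a]
          · intro b
            simp [Matrix.smul_apply, ← Finset.mul_sum, hA2 b] }
    have hle : Submodule.span ℂ {A : Matrix (Fin n) (Fin n) ℂ |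
        ∃ σ τ : Equiv.Perm (Fin n), A = Mmat n σ τ} ≤ V := by
      rw [Submodule.span_le]
      rintro A ⟨σ, τ, rfl⟩
      constructor
      · intro x
        rw [Finset.sum_congr rfl (fun y _ => Mmat_apply σ τ x y),
          Equiv.sum_comp τ⁻¹ (M0 n (σ⁻¹ x)), M0_row_sum hn]
      · intro y
        rw [Finset.sum_congr rfl (fun x _ => Mmat_apply σ τ x y),
          Equiv.sum_comp σ⁻¹ (fun p => M0 n p (τ⁻¹ y)), M0_col_sum hn]
    exact fun A hA => hle hA
  · -- zero-sum matrices ⊆ span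
    rintro A ⟨h1, h2⟩
    have hrep : (∑ a : Fin n, ∑ b : Fin n, A a b •
        (Matrix.of fun x y =>
          ((if x = a then (1:ℂ) else 0) - if x = 0 then 1 else 0) *
          ((if y = b then (1:ℂ) else 0) - if y = 0 then 1 else 0))) = A := by
      ext x y
      simp only [Matrix.sum_apply, Matrix.smul_apply, Matrix.of_apply, smul_eq_mul]
      have step1 : ∀ a : Fin n,
          (∑ b : Fin n, A a b *
            (((if x = a then (1:ℂ) else 0) - if x = 0 then 1 else 0) *
             ((if y = b then (1:ℂ) else 0) - if y = 0 then 1 else 0)))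
          = ((if x = a then (1:ℂ) else 0) - if x = 0 then 1 else 0) * A a y := by
        intro a
        have inner : (∑ b : Fin n, A a b *
            ((if y = b then (1:ℂ) else 0) - if y = 0 then 1 else 0)) = A a y := by
          have t1 : (∑ b : Fin n, A a b * (if y = b then (1:ℂ) else 0)) = A a y := by
            simp [mul_ite, Finset.sum_ite_eq]
          have t2 : (∑ b : Fin n, A a b * (if y = (0:Fin n) then (1:ℂ) else 0)) = 0 := by
            rw [← Finset.sum_mul, h1 a, zero_mul]
          rw [Finset.sum_congr rfl (fun b _ => mul_sub (A a b) _ _),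
            Finset.sum_sub_distrib, t1, t2, sub_zero]
        rw [Finset.sum_congr rfl (fun b _ => by ring :
          ∀ b ∈ Finset.univ, A a b *
            (((if x = a then (1:ℂ) else 0) - if x = 0 then 1 else 0) *
             ((if y = b then (1:ℂ) else 0) - if y = 0 then 1 else 0))
          = ((if x = a then (1:ℂ) else 0) - if x = 0 then 1 else 0) *
            (A a b * ((if y = b then (1:ℂ) else 0) - if y = 0 then 1 else 0))),
          ← Finset.mul_sum, inner]
      rw [Finset.sum_congr rfl (fun a _ => step1 a)]
      have t1 : (∑ a : Fin n, (if x = a then (1:ℂ) else 0) * A a y) = A x y := by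
        simp [ite_mul, Finset.sum_ite_eq]
      have t2 : (∑ a : Fin n, (if x = (0:Fin n) then (1:ℂ) else 0) * A a y) = 0 := by
        rw [← Finset.mul_sum, h2 y, mul_zero]
      rw [Finset.sum_congr rfl (fun a _ => sub_mul _ _ (A a y)),
        Finset.sum_sub_distrib, t1, t2, sub_zero]
    rw [SetLike.mem_coe, ← hrep]
    exact Submodule.sum_mem _ fun a _ => Submodule.sum_mem _ fun b _ =>
      Submodule.smul_mem _ _ (Dmem hn a b)
end
end

section
/- Let n = 3. In R = ℂ[z₁,z₂,z₃,w₁,w₂,w₃], set S := z₁w₁ + z₂w₂ + z₃w₃, let e₁, e₂ be the elementary symmetric polynomials in z₁,z₂,z₃ and ē₁, ē₂ those in w₁,w₂,w₃, and let Ω be the 3×3 matrix with rows (3, e₁, ē₁), (e₁, e₁²−2e₂, S), (ē₁, S, ē₁²−2ē₂). Then 16·ν₂² + det Ω = 0 in R. -/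
open MvPolynomial Finset Matrix

noncomputable section

/-- `S = z₁w₁ + z₂w₂ + z₃w₃`. -/
def Spoly : MvPolynomial (Fin 3 ⊕ Fin 3) ℂ := ∑ j : Fin 3, Zv 3 j * Wv 3 j

/-- `e_k(z₁,z₂,z₃)` inside `R`. -/
def eZ (k : ℕ) : MvPolynomial (Fin 3 ⊕ Fin 3) ℂ :=
  MvPolynomial.rename Sum.inl (MvPolynomial.esymm (Fin 3) ℂ k)

/-- `ē_k(w₁,w₂,w₃)` inside `R`. -/
def eW (k : ℕ) : MvPolynomial (Fin 3 ⊕ Fin 3) ℂ :=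
  MvPolynomial.rename Sum.inr (MvPolynomial.esymm (Fin 3) ℂ k)

/-- The matrix `Ω` with rows `(3, e₁, ē₁)`, `(e₁, e₁²−2e₂, S)`, `(ē₁, S, ē₁²−2ē₂)`. -/
def Omega : Matrix (Fin 3) (Fin 3) (MvPolynomial (Fin 3 ⊕ Fin 3) ℂ) :=
  Matrix.of
    ![![(3 : MvPolynomial (Fin 3 ⊕ Fin 3) ℂ), eZ 1, eW 1],
      ![eZ 1, eZ 1 ^ 2 - 2 * eZ 2, Spoly],
      ![eW 1, Spoly, eW 1 ^ 2 - 2 * eW 2]]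

/-!
Since `(i/4)² = -1/16`, `16 ν₂² = -P²` with `P = Σ (w_j - w_{j+1})(z_j + z_{j+1})`, which is `4i`
times the signed area when `w = z̄`. For a triangle, expanding `det Ω` after writing `e_k`, `ē_k`
in coordinates gives exactly `P²`.
-/

lemma esymm_two_fin_three {R : Type*} [CommSemiring R] :
    esymm (Fin 3) R 2 = X 0 * X 1 + X 0 * X 2 + X 1 * X 2 := by
  rw [esymm, show powersetCard 2 (univ : Finset (Fin 3)) = {{0, 1}, {0, 2}, {1, 2}} by decide,
    sum_insert (by decide), sum_insert (by decide), sum_singleton,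
    prod_pair (by decide), prod_pair (by decide), prod_pair (by decide), add_assoc]

lemma eZ_one : eZ 1 = Zv 3 0 + Zv 3 1 + Zv 3 2 := by
  simp only [eZ, esymm_one, Fin.sum_univ_three, map_add, rename_X, Zv]

lemma eZ_two : eZ 2 = Zv 3 0 * Zv 3 1 + Zv 3 0 * Zv 3 2 + Zv 3 1 * Zv 3 2 := by
  simp only [eZ, esymm_two_fin_three, map_add, map_mul, rename_X, Zv]

lemma eW_one : eW 1 = Wv 3 0 + Wv 3 1 + Wv 3 2 := by
  simp only [eW, esymm_one, Fin.sum_univ_three, map_add, rename_X, Wv]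

lemma eW_two : eW 2 = Wv 3 0 * Wv 3 1 + Wv 3 0 * Wv 3 2 + Wv 3 1 * Wv 3 2 := by
  simp only [eW, esymm_two_fin_three, map_add, map_mul, rename_X, Wv]

lemma sixteen_mul_nu2_sq (n : ℕ) [NeZero n] :
    16 * nu2 n ^ 2 = -(∑ j : Fin n, (Wv n j - Wv n (j + 1)) * (Zv n j + Zv n (j + 1))) ^ 2 := by
  have h : (16 : MvPolynomial (Fin n ⊕ Fin n) ℂ) * C (Complex.I / 4) ^ 2 = -1 := by
    rw [← map_ofNat C 16, ← C_pow, ← C_mul, div_pow, Complex.I_sq]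
    norm_num
  rw [nu2, mul_pow, ← mul_assoc, h, neg_one_mul]

lemma det_Omega :
    Omega.det = (∑ j : Fin 3, (Wv 3 j - Wv 3 (j + 1)) * (Zv 3 j + Zv 3 (j + 1))) ^ 2 := by
  simp only [Omega, Spoly, det_fin_three, of_apply, cons_val', cons_val_zero, cons_val_one,
    cons_val_two, head_cons, tail_cons, empty_val', cons_val_fin_one, head_fin_const,
    eZ_one, eZ_two, eW_one, eW_two, Fin.sum_univ_three, show (0 : Fin 3) + 1 = 1 from rfl,
    show (1 : Fin 3) + 1 = 2 from rfl, show (2 : Fin 3) + 1 = 0 from rfl]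
  ring

/-- For triangles (`n = 3`): `16·ν₂² + det Ω = 0`. -/
theorem statement17 : 16 * nu2 3 ^ 2 + Omega.det = 0 := by
  rw [sixteen_mul_nu2_sq, det_Omega, neg_add_cancel]
end
end
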